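/- arXiv:1308.2168 — 3 statements merged into one kernel-verified Lean document; each statement's English description precedes it below -/
import Mathlib

section
/- The GHZ strategy wins the three-player game with certainty: with the shared state ψ having amplitudes ψ_{000} = 1/2, ψ_{011} = ψ_{101} = ψ_{110} = −1/2 and all other amplitudes 0, and with the unitaries R₀ = S₀ = T₀ = I₂ (identity) and R₁ = S₁ = T₁ = H (the Hadamard matrix (1/√2)[[1,1],[1,−1]]), the winning probability equals 1; equivalently, for every question (r,s,t) ∈ Q and every outcome (A,B,C) with A⊕B⊕C ≠ r∨s∨t, the amplitude ψ^{rst}_{ABC} vanishes. -/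
open scoped BigOperators

/-- A three-qubit state: a tensor with indices `A B C : Fin 2` and complex entries. -/
abbrev QState := Fin 2 → Fin 2 → Fin 2 → ℂ

/-- The antisymmetric epsilon tensor on `{0,1}` with `ε 0 1 = 1`. -/
noncomputable def eps : Fin 2 → Fin 2 → ℂ := fun i j =>
  if i = 0 ∧ j = 1 then 1 else if i = 1 ∧ j = 0 then -1 else 0

/-- The gamma matrix associated to the first (A) slot. -/
noncomputable def gammaA (a : QState) : Matrix (Fin 2) (Fin 2) ℂ :=
  Matrix.of fun A₁ A₂ => ∑ B₁, ∑ B₂, ∑ C₁, ∑ C₂,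
    eps B₁ B₂ * eps C₁ C₂ * a A₁ B₁ C₁ * a A₂ B₂ C₂

/-- The gamma matrix associated to the second (B) slot. -/
noncomputable def gammaB (a : QState) : Matrix (Fin 2) (Fin 2) ℂ :=
  Matrix.of fun B₁ B₂ => ∑ C₁, ∑ C₂, ∑ A₁, ∑ A₂,
    eps C₁ C₂ * eps A₁ A₂ * a A₁ B₁ C₁ * a A₂ B₂ C₂

/-- The gamma matrix associated to the third (C) slot. -/
noncomputable def gammaC (a : QState) : Matrix (Fin 2) (Fin 2) ℂ :=
  Matrix.of fun C₁ C₂ => ∑ A₁, ∑ A₂, ∑ B₁, ∑ B₂,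
    eps A₁ A₂ * eps B₁ B₂ * a A₁ B₁ C₁ * a A₂ B₂ C₂

/-- The (cubic) triple product `T(a)_{A₃B₁C₁} = ε^{A₁A₂} a_{A₁B₁C₁} γ^A(a)_{A₂A₃}`. -/
noncomputable def Trip (a : QState) : QState := fun A₃ B₁ C₁ =>
  ∑ A₁, ∑ A₂, eps A₁ A₂ * a A₁ B₁ C₁ * gammaA a A₂ A₃

/-- The symplectic bilinear form `{a,b} = ε^{AA'} ε^{BB'} ε^{CC'} a_{ABC} b_{A'B'C'}`. -/
noncomputable def symp (a b : QState) : ℂ :=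
  ∑ A, ∑ A', ∑ B, ∑ B', ∑ C, ∑ C',
    eps A A' * eps B B' * eps C C' * a A B C * b A' B' C'

/-- Cayley's hyperdeterminant of a three-qubit state. -/
noncomputable def CayleyDet (a : QState) : ℂ :=
  (a 0 0 0)^2 * (a 1 1 1)^2 + (a 0 0 1)^2 * (a 1 1 0)^2
    + (a 0 1 0)^2 * (a 1 0 1)^2 + (a 0 1 1)^2 * (a 1 0 0)^2
  - 2 * ( a 0 0 0 * a 0 0 1 * a 1 1 0 * a 1 1 1
        + a 0 0 0 * a 0 1 0 * a 1 0 1 * a 1 1 1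
        + a 0 0 0 * a 0 1 1 * a 1 0 0 * a 1 1 1
        + a 0 0 1 * a 0 1 0 * a 1 0 1 * a 1 1 0
        + a 0 0 1 * a 0 1 1 * a 1 0 0 * a 1 1 0
        + a 0 1 0 * a 0 1 1 * a 1 0 0 * a 1 0 1 )
  + 4 * ( a 0 0 0 * a 0 1 1 * a 1 0 1 * a 1 1 0
        + a 0 0 1 * a 0 1 0 * a 1 0 0 * a 1 1 1 )

/-- Local transformation of a state by 2×2 matrices acting on the three slots. -/
noncomputable def transform (R S T : Matrix (Fin 2) (Fin 2) ℂ) (ψ : QState) : QState :=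
  fun A B C => ∑ A', ∑ B', ∑ C', R A A' * S B B' * T C C' * ψ A' B' C'

/-- The question set of the three-player GHZ game. -/
def Questions : Finset (Fin 2 × Fin 2 × Fin 2) := {(0,0,0), (0,1,1), (1,0,1), (1,1,0)}

/-- Disjunction `r ∨ s ∨ t` of bits represented as elements of `Fin 2`. -/
noncomputable def orr (r s t : Fin 2) : Fin 2 := if r = 1 ∨ s = 1 ∨ t = 1 then 1 else 0

/-- The winning probability of the local strategy `(ψ, R, S, T)` in the three-player
GHZ game; note `A + B + C` in `Fin 2` is addition mod 2. -/
noncomputable def winProb (ψ : QState) (R S T : Fin 2 → Matrix (Fin 2) (Fin 2) ℂ) : ℝ :=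
  (1/4) * ∑ q ∈ Questions, ∑ A, ∑ B, ∑ C,
    if A + B + C = orr q.1 q.2.1 q.2.2
    then ‖transform (R q.1) (S q.2.1) (T q.2.2) ψ A B C‖ ^ 2 else 0

/-- The Hadamard matrix `(1/√2)[[1,1],[1,−1]]`. -/
noncomputable def Hmat : Matrix (Fin 2) (Fin 2) ℂ :=
  (Real.sqrt 2 : ℂ)⁻¹ • !![1, 1; 1, -1]

/-- The GHZ-game strategy: measure in the computational basis (identity) on
question `0` and in the Hadamard basis on question `1`. -/
noncomputable def ghzStrategy : Fin 2 → Matrix (Fin 2) (Fin 2) ℂ :=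
  fun i => if i = 0 then 1 else Hmat

/-- The GHZ state `(1/2)(|000⟩ − |011⟩ − |101⟩ − |110⟩)`. -/
noncomputable def ghzState : QState := fun A B C =>
  if (A, B, C) = ((0 : Fin 2), (0 : Fin 2), (0 : Fin 2)) then 1/2
  else if (A, B, C) = ((0 : Fin 2), (1 : Fin 2), (1 : Fin 2)) ∨
          (A, B, C) = ((1 : Fin 2), (0 : Fin 2), (1 : Fin 2)) ∨
          (A, B, C) = ((1 : Fin 2), (1 : Fin 2), (0 : Fin 2)) then -(1/2)
  else 0

/-! Unitary local strategies preserve the total mass of the outcome distribution of each question,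
so the winning probability is `1` as soon as every losing outcome has amplitude zero. For the GHZ
strategy that vanishing is a direct computation: the GHZ state is supported on even-parity outcomes,
and Hadamards on any two of its qubits carry it to a state supported on odd-parity outcomes, which
are exactly the winning ones when the question contains a `1`. -/

open Matrix

section Unitary

variable {n 𝕜 : Type*} [Fintype n] [RCLike 𝕜]

lemma ofReal_sum_norm_sq_eq_star_dotProduct_self (v : n → 𝕜) :
    ((∑ i, ‖v i‖ ^ 2 : ℝ) : 𝕜) = star v ⬝ᵥ v := by
  simp [dotProduct, RCLike.conj_mul]

lemma sum_norm_sq_mulVec_of_mem_unitaryGroup [DecidableEq n] {U : Matrix n n 𝕜}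
    (hU : U ∈ unitaryGroup n 𝕜) (x : n → 𝕜) : ∑ i, ‖(U *ᵥ x) i‖ ^ 2 = ∑ i, ‖x i‖ ^ 2 := by
  apply RCLike.ofReal_injective (K := 𝕜)
  rw [ofReal_sum_norm_sq_eq_star_dotProduct_self, ofReal_sum_norm_sq_eq_star_dotProduct_self,
    star_mulVec, dotProduct_mulVec, vecMul_vecMul, ← star_eq_conjTranspose,
    mem_unitaryGroup_iff'.mp hU, vecMul_one]

end Unitary

open scoped Kronecker in
lemma transform_apply_eq_kronecker_mulVec (R S T : Matrix (Fin 2) (Fin 2) ℂ) (ψ : QState)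
    (A B C : Fin 2) :
    transform R S T ψ A B C = ((R ⊗ₖ (S ⊗ₖ T)) *ᵥ fun x => ψ x.1 x.2.1 x.2.2) (A, B, C) := by
  simp only [transform, mulVec, dotProduct, Fintype.sum_prod_type, kroneckerMap_apply, mul_assoc]

lemma sum_norm_sq_transform {R S T : Matrix (Fin 2) (Fin 2) ℂ} (hR : R ∈ unitaryGroup (Fin 2) ℂ)
    (hS : S ∈ unitaryGroup (Fin 2) ℂ) (hT : T ∈ unitaryGroup (Fin 2) ℂ) (ψ : QState) :
    ∑ A, ∑ B, ∑ C, ‖transform R S T ψ A B C‖ ^ 2 = ∑ A, ∑ B, ∑ C, ‖ψ A B C‖ ^ 2 := by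
  have h := sum_norm_sq_mulVec_of_mem_unitaryGroup
    (kronecker_mem_unitary hR (kronecker_mem_unitary hS hT)) fun x => ψ x.1 x.2.1 x.2.2
  simpa only [Fintype.sum_prod_type, ← transform_apply_eq_kronecker_mulVec] using h

lemma card_questions : Questions.card = 4 := rfl

theorem winProb_eq_one_of_losing_amplitudes_eq_zero {ψ : QState}
    (hψ : ∑ A, ∑ B, ∑ C, ‖ψ A B C‖ ^ 2 = 1)
    {R S T : Fin 2 → Matrix (Fin 2) (Fin 2) ℂ} (hR : ∀ i, R i ∈ unitaryGroup (Fin 2) ℂ)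
    (hS : ∀ i, S i ∈ unitaryGroup (Fin 2) ℂ) (hT : ∀ i, T i ∈ unitaryGroup (Fin 2) ℂ)
    (hlose : ∀ q ∈ Questions, ∀ A B C : Fin 2, A + B + C ≠ orr q.1 q.2.1 q.2.2 →
      transform (R q.1) (S q.2.1) (T q.2.2) ψ A B C = 0) :
    winProb ψ R S T = 1 := by
  have hwin : ∀ q ∈ Questions, (∑ A, ∑ B, ∑ C, if A + B + C = orr q.1 q.2.1 q.2.2
      then ‖transform (R q.1) (S q.2.1) (T q.2.2) ψ A B C‖ ^ 2 else 0) = 1 := by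
    intro q hq
    rw [← hψ, ← sum_norm_sq_transform (hR q.1) (hS q.2.1) (hT q.2.2)]
    refine Finset.sum_congr rfl fun A _ => Finset.sum_congr rfl fun B _ =>
      Finset.sum_congr rfl fun C _ => ?_
    split_ifs with h
    · rfl
    · simp [hlose q hq A B C h]
  rw [winProb, Finset.sum_congr rfl hwin, Finset.sum_const, card_questions]
  norm_num

lemma inv_sqrt_two_mul_self : (Real.sqrt 2 : ℂ)⁻¹ * (Real.sqrt 2 : ℂ)⁻¹ = 1 / 2 := by
  rw [← mul_inv, ← Complex.ofReal_mul, Real.mul_self_sqrt zero_le_two]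
  norm_num

lemma Hmat_mem_unitaryGroup : Hmat ∈ unitaryGroup (Fin 2) ℂ := by
  rw [mem_unitaryGroup_iff]
  ext i j
  fin_cases i <;> fin_cases j <;>
    norm_num [Hmat, mul_apply, Fin.sum_univ_two, inv_sqrt_two_mul_self]

lemma ghzStrategy_mem_unitaryGroup (i : Fin 2) : ghzStrategy i ∈ unitaryGroup (Fin 2) ℂ := by
  unfold ghzStrategy
  split_ifs
  · exact one_mem _
  · exact Hmat_mem_unitaryGroup

lemma sum_norm_sq_ghzState : ∑ A, ∑ B, ∑ C, ‖ghzState A B C‖ ^ 2 = 1 := by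
  norm_num [ghzState, Fin.sum_univ_two]

lemma transform_ghzState_eq_zero_of_losing : ∀ q ∈ Questions, ∀ A B C : Fin 2,
    A + B + C ≠ orr q.1 q.2.1 q.2.2 →
      transform (ghzStrategy q.1) (ghzStrategy q.2.1) (ghzStrategy q.2.2) ghzState A B C = 0 := by
  intro q hq A B C h
  fin_cases hq <;> fin_cases A <;> fin_cases B <;> fin_cases C <;>
    simp_all [transform, ghzStrategy, Hmat, ghzState, orr, Fin.sum_univ_two]

/-- the GHZ strategy wins the three-player game with certainty;
equivalently, every losing outcome has vanishing amplitude. -/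
theorem ghz_strategy_wins_with_certainty :
    winProb ghzState ghzStrategy ghzStrategy ghzStrategy = 1 ∧
    ∀ q ∈ Questions, ∀ A B C : Fin 2, A + B + C ≠ orr q.1 q.2.1 q.2.2 →
      transform (ghzStrategy q.1) (ghzStrategy q.2.1) (ghzStrategy q.2.2)
        ghzState A B C = 0 := by
  exact ⟨winProb_eq_one_of_losing_amplitudes_eq_zero sum_norm_sq_ghzState
    ghzStrategy_mem_unitaryGroup ghzStrategy_mem_unitaryGroup ghzStrategy_mem_unitaryGroup
    transform_ghzState_eq_zero_of_losing, transform_ghzState_eq_zero_of_losing⟩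
end

section
/- A biseparable (rank-2) resource cannot beat the Tsirelson-type bound: if the shared unit vector is a product along the A–BC split, ψ = x ⊗ φ with x ∈ ℂ² and φ ∈ ℂ²⊗ℂ² unit vectors, then for every choice of unitary 2×2 matrices R₀, R₁, S₀, S₁, T₀, T₁ the winning probability satisfies p ≤ 1/2 + 1/(2√2). -/
open scoped BigOperators

/-!
For a product state `ψ = x ⊗ φ` the outcome distribution on each question factors, so question
`(r, s, t)` is won with probability `(1 ± a_r β_st) / 2`, where `a_r` is the `Z`-correlator of
`R_r x` and `β_st` the `Z ⊗ Z`-correlator of `(S_s ⊗ T_t) φ`. Hence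
`8 p - 4 = a₀ (β₀₀ - β₁₁) - a₁ (β₀₁ + β₁₀)`. With `O_S = Sᴴ Z S`, a Hermitian unitary, the
correlator `β_st` is the real inner product of the unit vectors `u_s = (O_{S_s} ⊗ 1) φ` and
`v_t = (1 ⊗ O_{T_t}) φ`, so the right-hand side is a CHSH expression with `|a_r| ≤ 1`. It equals
`⟪w₁, v₀⟫ - ⟪w₂, v₁⟫` for `w₁ = a₀ u₀ - a₁ u₁`, `w₂ = a₁ u₀ + a₀ u₁`, and the cross terms cancel in
`‖w₁‖² + ‖w₂‖² = (a₀² + a₁²)(‖u₀‖² + ‖u₁‖²) ≤ 4`, which bounds it by `2√2`.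
-/

open Matrix
open scoped Kronecker InnerProductSpace

section

variable {m n : Type*} [Fintype m] [Fintype n]

theorem Matrix.star_mulVec_dotProduct_mulVec {k α : Type*} [Fintype k] [CommSemiring α]
    [StarRing α] (M : Matrix m n α) (N : Matrix m k α) (u : n → α) (v : k → α) :
    star (M *ᵥ u) ⬝ᵥ (N *ᵥ v) = star u ⬝ᵥ ((Mᴴ * N) *ᵥ v) := by
  rw [star_mulVec, ← dotProduct_mulVec, mulVec_mulVec]

theorem Matrix.kronecker_conjTranspose_mul_self [DecidableEq m] [DecidableEq n] {α : Type*}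
    [CommSemiring α] [StarRing α] {S : Matrix m m α} {T : Matrix n n α} (hS : Sᴴ * S = 1)
    (hT : Tᴴ * T = 1) : (S ⊗ₖ T)ᴴ * (S ⊗ₖ T) = 1 := by
  rw [conjTranspose_kronecker, ← mul_kronecker_mul, hS, hT, one_kronecker_one]

theorem star_dotProduct_self_eq_sum_norm_sq (v : n → ℂ) :
    star v ⬝ᵥ v = ((∑ i, ‖v i‖ ^ 2 : ℝ) : ℂ) := by
  push_cast
  exact Finset.sum_congr rfl fun i _ => Complex.conj_mul' (v i)

theorem sum_norm_sq_mulVec_of_conjTranspose_mul_self [DecidableEq n] {U : Matrix n n ℂ}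
    (hU : Uᴴ * U = 1) (v : n → ℂ) : ∑ i, ‖(U *ᵥ v) i‖ ^ 2 = ∑ i, ‖v i‖ ^ 2 := by
  have h := Matrix.star_mulVec_dotProduct_mulVec U U v v
  rw [hU, one_mulVec, star_dotProduct_self_eq_sum_norm_sq,
    star_dotProduct_self_eq_sum_norm_sq] at h
  exact_mod_cast h

theorem norm_toLp_mulVec_of_conjTranspose_mul_self [DecidableEq n] {U : Matrix n n ℂ}
    (hU : Uᴴ * U = 1) (v : n → ℂ) : ‖WithLp.toLp 2 (U *ᵥ v)‖ = ‖WithLp.toLp 2 v‖ := by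
  simp only [EuclideanSpace.norm_eq, sum_norm_sq_mulVec_of_conjTranspose_mul_self hU]

theorem EuclideanSpace.real_inner_eq_re_inner (x y : EuclideanSpace ℂ n) :
    ⟪x, y⟫_ℝ = (⟪x, y⟫_ℂ).re := by
  simp [PiLp.inner_apply, Complex.inner]

end

noncomputable def pauliZ : Matrix (Fin 2) (Fin 2) ℂ := diagonal ![1, -1]

theorem pauliZ_isHermitian : pauliZ.IsHermitian := by
  rw [pauliZ, isHermitian_diagonal_iff]
  intro i
  fin_cases i <;> simp [IsSelfAdjoint]

theorem pauliZ_mul_self : pauliZ * pauliZ = 1 := by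
  rw [pauliZ, diagonal_mul_diagonal, ← diagonal_one]
  congr 1
  ext i
  fin_cases i <;> simp

/-- Applying `S` and then measuring in the computational basis measures this observable. -/
noncomputable def zObservable (S : Matrix (Fin 2) (Fin 2) ℂ) : Matrix (Fin 2) (Fin 2) ℂ :=
  Sᴴ * pauliZ * S

theorem zObservable_isHermitian (S : Matrix (Fin 2) (Fin 2) ℂ) : (zObservable S).IsHermitian :=
  isHermitian_conjTranspose_mul_mul S pauliZ_isHermitian

theorem zObservable_conjTranspose_mul_self {S : Matrix (Fin 2) (Fin 2) ℂ} (hS : Sᴴ * S = 1) :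
    (zObservable S)ᴴ * zObservable S = 1 := by
  have hS' : S * Sᴴ = 1 := mul_eq_one_comm.mp hS
  rw [(zObservable_isHermitian S).eq, zObservable]
  calc Sᴴ * pauliZ * S * (Sᴴ * pauliZ * S) = Sᴴ * (pauliZ * (S * Sᴴ) * pauliZ) * S := by
        simp only [Matrix.mul_assoc]
    _ = 1 := by rw [hS', Matrix.mul_one, pauliZ_mul_self, Matrix.mul_one, hS]

noncomputable def correlatorA (v : Fin 2 → ℂ) : ℝ := ‖v 0‖ ^ 2 - ‖v 1‖ ^ 2

noncomputable def correlatorBC (w : Fin 2 × Fin 2 → ℂ) : ℝ :=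
  ‖w (0, 0)‖ ^ 2 - ‖w (0, 1)‖ ^ 2 - ‖w (1, 0)‖ ^ 2 + ‖w (1, 1)‖ ^ 2

theorem abs_correlatorA_le_one {v : Fin 2 → ℂ} (hv : ∑ i, ‖v i‖ ^ 2 = 1) :
    |correlatorA v| ≤ 1 := by
  rw [Fin.sum_univ_two] at hv
  rw [correlatorA, abs_le]
  constructor <;> nlinarith [sq_nonneg ‖v 0‖, sq_nonneg ‖v 1‖]

theorem correlatorBC_eq_dotProduct (w : Fin 2 × Fin 2 → ℂ) :
    (correlatorBC w : ℂ) = star w ⬝ᵥ ((pauliZ ⊗ₖ pauliZ) *ᵥ w) := by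
  simp only [correlatorBC, dotProduct, mulVec, kroneckerMap_apply, pauliZ, diagonal_apply,
    Fintype.sum_prod_type, Fin.sum_univ_two, Pi.star_apply, Complex.star_def]
  push_cast
  simp only [← Complex.conj_mul', mul_one, one_mul, mul_zero, zero_mul, add_zero, zero_add, mul_neg,
    neg_mul, neg_zero, neg_neg]
  ring

theorem correlatorBC_kronecker_mulVec (S T : Matrix (Fin 2) (Fin 2) ℂ) (φ : Fin 2 × Fin 2 → ℂ) :
    correlatorBC ((S ⊗ₖ T) *ᵥ φ) =
      ⟪WithLp.toLp 2 ((zObservable S ⊗ₖ 1) *ᵥ φ), WithLp.toLp 2 ((1 ⊗ₖ zObservable T) *ᵥ φ)⟫_ℝ := by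
  have h_factor : (S ⊗ₖ T)ᴴ * (pauliZ ⊗ₖ pauliZ * (S ⊗ₖ T))
      = (zObservable S ⊗ₖ 1)ᴴ * (1 ⊗ₖ zObservable T) := by
    rw [conjTranspose_kronecker, conjTranspose_kronecker, (zObservable_isHermitian S).eq,
      conjTranspose_one, ← mul_kronecker_mul, ← mul_kronecker_mul, ← mul_kronecker_mul,
      Matrix.mul_one, Matrix.one_mul, zObservable, zObservable, Matrix.mul_assoc,
      Matrix.mul_assoc]
  rw [EuclideanSpace.real_inner_eq_re_inner, EuclideanSpace.inner_toLp_toLp, dotProduct_comm,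
    Matrix.star_mulVec_dotProduct_mulVec, ← h_factor, ← Matrix.star_mulVec_dotProduct_mulVec,
    ← mulVec_mulVec, ← correlatorBC_eq_dotProduct, Complex.ofReal_re]

theorem chsh_le_two_mul_sqrt_two {F : Type*} [NormedAddCommGroup F] [InnerProductSpace ℝ F]
    {a₀ a₁ : ℝ} (ha₀ : |a₀| ≤ 1) (ha₁ : |a₁| ≤ 1) {u₀ u₁ v₀ v₁ : F}
    (hu₀ : ‖u₀‖ ≤ 1) (hu₁ : ‖u₁‖ ≤ 1) (hv₀ : ‖v₀‖ ≤ 1) (hv₁ : ‖v₁‖ ≤ 1) :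
    a₀ * (⟪u₀, v₀⟫_ℝ - ⟪u₁, v₁⟫_ℝ) - a₁ * (⟪u₀, v₁⟫_ℝ + ⟪u₁, v₀⟫_ℝ) ≤ 2 * √2 := by
  set w₁ := a₀ • u₀ - a₁ • u₁
  set w₂ := a₁ • u₀ + a₀ • u₁
  have h_eq : a₀ * (⟪u₀, v₀⟫_ℝ - ⟪u₁, v₁⟫_ℝ) - a₁ * (⟪u₀, v₁⟫_ℝ + ⟪u₁, v₀⟫_ℝ)
      = ⟪w₁, v₀⟫_ℝ - ⟪w₂, v₁⟫_ℝ := by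
    simp only [w₁, w₂, inner_sub_left, inner_add_left, real_inner_smul_left]
    ring
  have h_norm : ‖w₁‖ ^ 2 + ‖w₂‖ ^ 2 = (a₀ ^ 2 + a₁ ^ 2) * (‖u₀‖ ^ 2 + ‖u₁‖ ^ 2) := by
    simp only [w₁, w₂, ← real_inner_self_eq_norm_sq, inner_sub_left, inner_sub_right,
      inner_add_left, inner_add_right, real_inner_smul_left, real_inner_smul_right,
      real_inner_comm u₀ u₁]
    ring
  have h_sq : ‖w₁‖ ^ 2 + ‖w₂‖ ^ 2 ≤ 4 := by
    calc ‖w₁‖ ^ 2 + ‖w₂‖ ^ 2 ≤ (1 + 1) * (1 + 1) := by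
          rw [h_norm]
          gcongr
          · exact (sq_le_one_iff_abs_le_one a₀).2 ha₀
          · exact (sq_le_one_iff_abs_le_one a₁).2 ha₁
          · exact pow_le_one₀ (norm_nonneg u₀) hu₀
          · exact pow_le_one₀ (norm_nonneg u₁) hu₁
      _ = 4 := by norm_num
  have h_sum : ‖w₁‖ + ‖w₂‖ ≤ 2 * √2 := by
    have h8 : (2 * √2) ^ 2 = 8 := by rw [mul_pow, Real.sq_sqrt zero_le_two]; norm_num
    nlinarith [sq_nonneg (‖w₁‖ - ‖w₂‖), Real.sqrt_nonneg 2]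
  have h₁ : ⟪w₁, v₀⟫_ℝ ≤ ‖w₁‖ :=
    (real_inner_le_norm w₁ v₀).trans (mul_le_of_le_one_right (norm_nonneg _) hv₀)
  have h₂ : -⟪w₂, v₁⟫_ℝ ≤ ‖w₂‖ :=
    (neg_le_abs _).trans ((abs_real_inner_le_norm w₂ v₁).trans
      (mul_le_of_le_one_right (norm_nonneg _) hv₁))
  linarith

theorem transform_of_product {x : Fin 2 → ℂ} {φ : Fin 2 → Fin 2 → ℂ} {ψ : QState}
    (hψ : ∀ A B C, ψ A B C = x A * φ B C) (R S T : Matrix (Fin 2) (Fin 2) ℂ) (A B C : Fin 2) :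
    transform R S T ψ A B C = (R *ᵥ x) A * ((S ⊗ₖ T) *ᵥ Function.uncurry φ) (B, C) := by
  simp only [transform, hψ, mulVec, dotProduct, kroneckerMap_apply, Fintype.sum_prod_type,
    Function.uncurry_apply_pair, Fin.sum_univ_two]
  ring

theorem sum_parity_eq {p : Fin 2 → ℝ} {q : Fin 2 × Fin 2 → ℝ} (hp : ∑ A, p A = 1)
    (hq : ∑ i, q i = 1) (z : Fin 2) :
    ∑ A, ∑ B, ∑ C, (if A + B + C = z then p A * q (B, C) else 0)
      = (1 + (-1) ^ z.val * (p 0 - p 1) * (q (0, 0) - q (0, 1) - q (1, 0) + q (1, 1))) / 2 := by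
  simp only [Fin.sum_univ_two, Fintype.sum_prod_type] at hp hq ⊢
  fin_cases z <;>
    simp +decide only [↓reduceIte, add_zero, zero_add, pow_zero, pow_one, one_mul, neg_mul] <;>
    linear_combination (1 / 2 : ℝ) * (hp + (p 0 + p 1) * hq)

theorem winProb_eq_of_product {ψ : QState} {x : Fin 2 → ℂ} {φ : Fin 2 → Fin 2 → ℂ}
    (hx : ∑ A, ‖x A‖ ^ 2 = 1) (hφ : ∑ B, ∑ C, ‖φ B C‖ ^ 2 = 1)
    (hψ : ∀ A B C, ψ A B C = x A * φ B C) {R S T : Fin 2 → Matrix (Fin 2) (Fin 2) ℂ}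
    (hR : ∀ i, (R i)ᴴ * R i = 1) (hS : ∀ i, (S i)ᴴ * S i = 1) (hT : ∀ i, (T i)ᴴ * T i = 1) :
    let a r := correlatorA (R r *ᵥ x)
    let β s t := correlatorBC ((S s ⊗ₖ T t) *ᵥ Function.uncurry φ)
    winProb ψ R S T = 1 / 2 + (a 0 * (β 0 0 - β 1 1) - a 1 * (β 0 1 + β 1 0)) / 8 := by
  intro a β
  have hA (r : Fin 2) : ∑ A, ‖(R r *ᵥ x) A‖ ^ 2 = 1 :=
    (sum_norm_sq_mulVec_of_conjTranspose_mul_self (hR r) x).trans hx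
  have hBC (s t : Fin 2) : ∑ i, ‖((S s ⊗ₖ T t) *ᵥ Function.uncurry φ) i‖ ^ 2 = 1 := by
    rw [sum_norm_sq_mulVec_of_conjTranspose_mul_self
      (kronecker_conjTranspose_mul_self (hS s) (hT t)), Fintype.sum_prod_type]
    exact hφ
  have h_question (r s t : Fin 2) : ∑ A, ∑ B, ∑ C,
      (if A + B + C = orr r s t then ‖transform (R r) (S s) (T t) ψ A B C‖ ^ 2 else 0)
        = (1 + (-1) ^ (orr r s t).val * a r * β s t) / 2 := by
    simp only [transform_of_product hψ, norm_mul, mul_pow]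
    exact sum_parity_eq (p := fun A => ‖(R r *ᵥ x) A‖ ^ 2) (hA r) (hBC s t) _
  simp only [winProb, Questions, h_question]
  simp +decide only [orr, Finset.mem_insert, Finset.mem_singleton,
    Finset.sum_insert, Finset.sum_singleton, ↓reduceIte, Fin.val_zero, Fin.val_one, pow_zero,
    pow_one]
  ring

/-- a biseparable (rank-2) resource cannot beat the Tsirelson-type
bound: if the shared unit vector is a product along the A–BC split then every local
strategy wins with probability at most `1/2 + 1/(2√2)`. -/
theorem biseparable_tsirelson_bound (ψ : QState)
    (x : Fin 2 → ℂ) (φ : Fin 2 → Fin 2 → ℂ)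
    (hx : ∑ A, ‖x A‖ ^ 2 = 1)
    (hφ : ∑ B, ∑ C, ‖φ B C‖ ^ 2 = 1)
    (hψ : ∀ A B C : Fin 2, ψ A B C = x A * φ B C)
    (R S T : Fin 2 → Matrix (Fin 2) (Fin 2) ℂ)
    (hR : ∀ i, (R i).conjTranspose * R i = 1)
    (hS : ∀ i, (S i).conjTranspose * S i = 1)
    (hT : ∀ i, (T i).conjTranspose * T i = 1) :
    winProb ψ R S T ≤ 1/2 + 1/(2 * Real.sqrt 2) := by
  have hφ_norm : ‖WithLp.toLp 2 (Function.uncurry φ)‖ = 1 := by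
    simp only [EuclideanSpace.norm_eq, Fintype.sum_prod_type, Function.uncurry_apply_pair, hφ,
      Real.sqrt_one]
  let I : Matrix (Fin 2) (Fin 2) ℂ := 1
  have hI : Iᴴ * I = 1 := by simp [I]
  have ha (r : Fin 2) : |correlatorA (R r *ᵥ x)| ≤ 1 :=
    abs_correlatorA_le_one ((sum_norm_sq_mulVec_of_conjTranspose_mul_self (hR r) x).trans hx)
  have hu (s : Fin 2) : ‖WithLp.toLp 2 ((zObservable (S s) ⊗ₖ I) *ᵥ Function.uncurry φ)‖ ≤ 1 := by
    rw [norm_toLp_mulVec_of_conjTranspose_mul_self (kronecker_conjTranspose_mul_self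
      (zObservable_conjTranspose_mul_self (hS s)) hI), hφ_norm]
  have hv (t : Fin 2) : ‖WithLp.toLp 2 ((I ⊗ₖ zObservable (T t)) *ᵥ Function.uncurry φ)‖ ≤ 1 := by
    rw [norm_toLp_mulVec_of_conjTranspose_mul_self (kronecker_conjTranspose_mul_self
      hI (zObservable_conjTranspose_mul_self (hT t))), hφ_norm]
  have h_chsh := chsh_le_two_mul_sqrt_two (ha 0) (ha 1) (hu 0) (hu 1) (hv 0) (hv 1)
  have h_sqrt : 2 * √2 / 8 = 1 / (2 * √2) := by
    field_simp
    norm_num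
  rw [show winProb ψ R S T = _ from winProb_eq_of_product hx hφ hψ hR hS hT]
  simp only [correlatorBC_kronecker_mulVec]
  linarith
end

section
/- A totally separable (rank-1) resource gives no quantum advantage: if the shared unit vector is a product state, ψ_{ABC} = x_A y_B z_C with x, y, z ∈ ℂ² unit vectors, then for every choice of unitary 2×2 matrices R₀, R₁, S₀, S₁, T₀, T₁ the winning probability satisfies p ≤ 3/4. -/
open scoped BigOperators

/-!
On a product state the local unitaries act factor by factor, so the three answers are
independent, with distributions `‖(R r *ᵥ x) A‖ ^ 2`, `‖(S s *ᵥ y) B‖ ^ 2`, `‖(T t *ᵥ z) C‖ ^ 2`: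
the players are running a classical randomized local strategy. With the correlators
`α r = P(A = 0) - P(A = 1)` (and `β`, `γ` likewise) the winning probability is
`1/2 + (α₀β₀γ₀ - α₀β₁γ₁ - α₁β₀γ₁ - α₁β₁γ₀) / 8`, and Mermin's inequality bounds the bracket by `2`.
-/

open Matrix

theorem star_dotProduct_self {n : Type*} [Fintype n] (v : n → ℂ) :
    star v ⬝ᵥ v = ((∑ i, ‖v i‖ ^ 2 : ℝ) : ℂ) := by
  push_cast
  simp only [dotProduct, Pi.star_apply, RCLike.star_def, Complex.conj_mul']

theorem sum_norm_sq_mulVec {n : Type*} [Fintype n] [DecidableEq n] {R : Matrix n n ℂ}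
    (hR : Rᴴ * R = 1) (x : n → ℂ) : ∑ i, ‖(R *ᵥ x) i‖ ^ 2 = ∑ i, ‖x i‖ ^ 2 := by
  have h : star (R *ᵥ x) ⬝ᵥ (R *ᵥ x) = star x ⬝ᵥ x := by
    rw [star_mulVec, ← dotProduct_mulVec, mulVec_mulVec, hR, one_mulVec]
  simpa only [star_dotProduct_self, Complex.ofReal_inj] using h

theorem abs_add_abs_le_of_abs_add_le_of_abs_sub_le {u v c : ℝ} (h₁ : |u + v| ≤ c)
    (h₂ : |u - v| ≤ c) : |u| + |v| ≤ c := by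
  rw [abs_le] at h₁ h₂
  rcases abs_cases u with ⟨hu, -⟩ | ⟨hu, -⟩ <;> rcases abs_cases v with ⟨hv, -⟩ | ⟨hv, -⟩ <;>
    linarith

theorem abs_mul_add_mul_le {s t a b : ℝ} (hs : |s| ≤ 1) (ht : |t| ≤ 1) :
    |s * a + t * b| ≤ |a| + |b| :=
  calc |s * a + t * b| ≤ |s| * |a| + |t| * |b| := by
        simpa only [abs_mul] using abs_add_le (s * a) (t * b)
    _ ≤ |a| + |b| := by gcongr <;> exact mul_le_of_le_one_left (abs_nonneg _) ‹_›

theorem mermin_le_two {x₀ x₁ y₀ y₁ z₀ z₁ : ℝ} (hx₀ : |x₀| ≤ 1) (hx₁ : |x₁| ≤ 1)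
    (hy₀ : |y₀| ≤ 1) (hy₁ : |y₁| ≤ 1) (hz₀ : |z₀| ≤ 1) (hz₁ : |z₁| ≤ 1) :
    x₀ * y₀ * z₀ - x₀ * y₁ * z₁ - x₁ * y₀ * z₁ - x₁ * y₁ * z₀ ≤ 2 := by
  have hz : |z₀ + z₁| + |z₀ - z₁| ≤ 2 := by
    apply abs_add_abs_le_of_abs_add_le_of_abs_sub_le <;> rw [abs_le] at * <;>
      constructor <;> linarith
  have hyz : |y₀ * z₀ - y₁ * z₁| + |y₀ * z₁ + y₁ * z₀| ≤ 2 := by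
    apply abs_add_abs_le_of_abs_add_le_of_abs_sub_le
    · calc _ = |y₀ * (z₀ + z₁) + y₁ * (z₀ - z₁)| := by ring_nf
        _ ≤ 2 := (abs_mul_add_mul_le hy₀ hy₁).trans hz
    · calc _ = |y₀ * (z₀ - z₁) + (-y₁) * (z₀ + z₁)| := by ring_nf
        _ ≤ 2 := (abs_mul_add_mul_le hy₀ (by rwa [abs_neg])).trans (by linarith)
  calc _ ≤ |x₀ * (y₀ * z₀ - y₁ * z₁) + (-x₁) * (y₀ * z₁ + y₁ * z₀)| :=
        le_of_eq_of_le (by ring) (le_abs_self _)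
    _ ≤ 2 := (abs_mul_add_mul_le hx₀ (by rwa [abs_neg])).trans hyz

theorem sum_parity_prob_eq {f g h : Fin 2 → ℝ} (hf : ∑ A, f A = 1) (hg : ∑ B, g B = 1)
    (hh : ∑ C, h C = 1) (o : Fin 2) :
    ∑ A, ∑ B, ∑ C, (if A + B + C = o then f A * g B * h C else 0) =
      if o = 0 then (1 + (f 0 - f 1) * (g 0 - g 1) * (h 0 - h 1)) / 2
      else (1 - (f 0 - f 1) * (g 0 - g 1) * (h 0 - h 1)) / 2 := by
  rw [Fin.sum_univ_two] at hf hg hh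
  fin_cases o <;>
    simp only [Fin.zero_eta, Fin.mk_one, Fin.isValue, Fin.sum_univ_two, add_zero, zero_add,
      Fin.reduceAdd, ↓reduceIte, zero_ne_one, one_ne_zero, add_eq_right] <;>
    linear_combination (1/2 : ℝ) * ((g 0 + g 1) * (h 0 + h 1) * hf + (h 0 + h 1) * hg + hh)

theorem transform_product (R S T : Matrix (Fin 2) (Fin 2) ℂ) (x y z : Fin 2 → ℂ) :
    transform R S T (fun A B C => x A * y B * z C) =
      fun A B C => (R *ᵥ x) A * (S *ᵥ y) B * (T *ᵥ z) C := by
  funext A B C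
  simp only [transform, mulVec, dotProduct, Fin.sum_univ_two]
  ring

/-- `a r A` is the probability that the first player answers `A` to question `r`; likewise
`b`, `c`. -/
noncomputable def localWinProb (a b c : Fin 2 → Fin 2 → ℝ) : ℝ :=
  (1/4) * ∑ q ∈ Questions, ∑ A, ∑ B, ∑ C,
    if A + B + C = orr q.1 q.2.1 q.2.2 then a q.1 A * b q.2.1 B * c q.2.2 C else 0

theorem winProb_of_product {ψ : QState} {x y z : Fin 2 → ℂ}
    (hψ : ∀ A B C, ψ A B C = x A * y B * z C) (R S T : Fin 2 → Matrix (Fin 2) (Fin 2) ℂ) :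
    winProb ψ R S T = localWinProb (fun r A => ‖(R r *ᵥ x) A‖ ^ 2)
      (fun s B => ‖(S s *ᵥ y) B‖ ^ 2) (fun t C => ‖(T t *ᵥ z) C‖ ^ 2) := by
  have hψ' : ψ = fun A B C => x A * y B * z C := funext₃ hψ
  simp only [winProb, localWinProb, hψ', transform_product, norm_mul, mul_pow]

theorem localWinProb_eq {a b c : Fin 2 → Fin 2 → ℝ} (ha : ∀ r, ∑ A, a r A = 1)
    (hb : ∀ s, ∑ B, b s B = 1) (hc : ∀ t, ∑ C, c t C = 1) :
    localWinProb a b c = 1/2 + (1/8) *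
      ((a 0 0 - a 0 1) * (b 0 0 - b 0 1) * (c 0 0 - c 0 1)
        - (a 0 0 - a 0 1) * (b 1 0 - b 1 1) * (c 1 0 - c 1 1)
        - (a 1 0 - a 1 1) * (b 0 0 - b 0 1) * (c 1 0 - c 1 1)
        - (a 1 0 - a 1 1) * (b 1 0 - b 1 1) * (c 0 0 - c 0 1)) := by
  simp only [localWinProb, Questions, sum_parity_prob_eq (ha _) (hb _) (hc _)]
  rw [Finset.sum_insert (by decide), Finset.sum_insert (by decide),
    Finset.sum_insert (by decide), Finset.sum_singleton]
  simp only [orr, Fin.isValue, zero_ne_one, one_ne_zero, or_self, or_true, or_false, ↓reduceIte]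
  ring

theorem localWinProb_le {a b c : Fin 2 → Fin 2 → ℝ} (ha₀ : ∀ r A, 0 ≤ a r A)
    (hb₀ : ∀ s B, 0 ≤ b s B) (hc₀ : ∀ t C, 0 ≤ c t C) (ha : ∀ r, ∑ A, a r A = 1)
    (hb : ∀ s, ∑ B, b s B = 1) (hc : ∀ t, ∑ C, c t C = 1) :
    localWinProb a b c ≤ 3/4 := by
  have bias_le {f : Fin 2 → ℝ} (hf₀ : ∀ i, 0 ≤ f i) (hf : ∑ i, f i = 1) : |f 0 - f 1| ≤ 1 := by
    rw [Fin.sum_univ_two] at hf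
    exact abs_le.2 ⟨by linarith [hf₀ 0], by linarith [hf₀ 1]⟩
  rw [localWinProb_eq ha hb hc]
  linarith [mermin_le_two (bias_le (ha₀ 0) (ha 0)) (bias_le (ha₀ 1) (ha 1))
    (bias_le (hb₀ 0) (hb 0)) (bias_le (hb₀ 1) (hb 1))
    (bias_le (hc₀ 0) (hc 0)) (bias_le (hc₀ 1) (hc 1))]

/-- a totally separable (rank-1) resource gives no quantum advantage:
if the shared unit vector is a product state then every local strategy wins with
probability at most `3/4`. -/
theorem separable_no_quantum_advantage (ψ : QState)
    (x y z : Fin 2 → ℂ)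
    (hx : ∑ A, ‖x A‖ ^ 2 = 1)
    (hy : ∑ B, ‖y B‖ ^ 2 = 1)
    (hz : ∑ C, ‖z C‖ ^ 2 = 1)
    (hψ : ∀ A B C : Fin 2, ψ A B C = x A * y B * z C)
    (R S T : Fin 2 → Matrix (Fin 2) (Fin 2) ℂ)
    (hR : ∀ i, (R i).conjTranspose * R i = 1)
    (hS : ∀ i, (S i).conjTranspose * S i = 1)
    (hT : ∀ i, (T i).conjTranspose * T i = 1) :
    winProb ψ R S T ≤ 3/4 := by
  rw [winProb_of_product hψ]
  exact localWinProb_le (fun _ _ => by positivity) (fun _ _ => by positivity)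
    (fun _ _ => by positivity) (fun r => (sum_norm_sq_mulVec (hR r) x).trans hx)
    (fun s => (sum_norm_sq_mulVec (hS s) y).trans hy)
    (fun t => (sum_norm_sq_mulVec (hT t) z).trans hz)
end
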